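/- arXiv:2302.07914 — 3 statements merged into one kernel-verified Lean document; each statement's English description precedes it below -/
import Mathlib

section
/- Let n > 2 and 2 ≤ k ≤ n with 2k ≠ n + 2. Let Ω be the set of (k−1)-element subsets of Fin n, and let W be the wreath product ℤ/2ℤ ≀_Ω S_n, realized as the semidirect product (Ω → ℤ/2ℤ) ⋊ Perm(Fin n), where a permutation σ of Fin n acts on a function f : Ω → ℤ/2ℤ by (σ · f)(S) = f(σ⁻¹(S)) (with σ acting on subsets elementwise). Then Aut(F_k(K_{2,n})) is isomorphic as a group to W. -/
def tokenGraph {V : Type*} [DecidableEq V] (G : SimpleGraph V) (k : ℕ) :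
    SimpleGraph {A : Finset V // A.card = k} where
  Adj A B := ∃ a b, G.Adj a b ∧ symmDiff A.1 B.1 = {a, b}
  symm := by
    constructor
    rintro A B ⟨a, b, hab, h⟩
    exact ⟨a, b, hab, by rwa [symmDiff_comm]⟩
  loopless := by
    constructor
    rintro A ⟨a, b, hab, h⟩
    rw [symmDiff_self] at h
    exact absurd h.symm (by simp)

/-- The elementwise action of a permutation of `Fin n` on the `j`-element
subsets of `Fin n`, as an equivalence. -/
def permSubsets (n j : ℕ) (σ : Equiv.Perm (Fin n)) :
    {S : Finset (Fin n) // S.card = j} ≃ {S : Finset (Fin n) // S.card = j} where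
  toFun S := ⟨S.1.image σ, by rw [Finset.card_image_of_injective _ σ.injective, S.2]⟩
  invFun S := ⟨S.1.image ⇑(σ⁻¹), by rw [Finset.card_image_of_injective _ (σ⁻¹).injective, S.2]⟩
  left_inv S := Subtype.ext (by
    simp [Finset.image_image, Function.comp_def])
  right_inv S := Subtype.ext (by
    simp [Finset.image_image, Function.comp_def])

/-- The action of `S_n` on `(ℤ/2ℤ)^Ω`, where `Ω` is the set of `j`-element
subsets of `Fin n` : a permutation `σ` sends `f` to `S ↦ f (σ⁻¹ S)`,
`σ⁻¹` acting on subsets elementwise. -/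
def wreathAction (n j : ℕ) :
    Equiv.Perm (Fin n) →*
      MulAut ({S : Finset (Fin n) // S.card = j} → Multiplicative (ZMod 2)) where
  toFun σ :=
    { toFun := fun f S => f (permSubsets n j (σ⁻¹) S)
      invFun := fun f S => f (permSubsets n j σ S)
      left_inv := fun f => funext fun S => congrArg f (by
        simp [permSubsets, Finset.image_image, Function.comp_def])
      right_inv := fun f => funext fun S => congrArg f (by
        simp [permSubsets, Finset.image_image, Function.comp_def])
      map_mul' := fun f g => rfl }
  map_one' := by
    ext f S
    exact congrArg f (by simp [permSubsets])
  map_mul' := fun σ τ => by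
    ext f S
    exact congrArg f (by
      simp [permSubsets, Finset.image_image, Function.comp_def, mul_inv_rev])

/-! A `k`-token of `K_{2,n}`, `k = a + 2`, is determined by its traces on the two sides. According
to whether the trace on the two-element side is empty, one point or both points, the token graph
becomes a graph on the `(a+2)`-subsets, two copies of the `(a+1)`-subsets and the `a`-subsets of
`[n]`, with edges given by inclusion between consecutive layers. The two copies of an
`(a+1)`-set are twins and no other vertices are, while the outer layers have degrees `2(a+2)` and
`2(n-a)`, which differ because `2k ≠ n + 2`. So every automorphism preserves the layers and
permutes the twin pairs; the induced bijections of the layers preserve inclusion, hence come from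
a single permutation of `[n]` (descend one layer at a time down to the singletons). What is left
is an independent swap inside each twin pair, an element of `(ℤ/2)^Ω`. -/

namespace SimpleGraph

variable {V W : Type*} {G : SimpleGraph V} {G' : SimpleGraph W}

def HasTwin (G : SimpleGraph V) (v : V) : Prop :=
  ∃ w ≠ v, G.neighborSet w = G.neighborSet v

theorem Iso.neighborSet_eq_iff (φ : G ≃g G') {v w : V} :
    G'.neighborSet (φ v) = G'.neighborSet (φ w) ↔ G.neighborSet v = G.neighborSet w := by
  rw [← φ.image_neighborSet, ← φ.image_neighborSet, (Set.image_injective.2 φ.injective).eq_iff]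

theorem Iso.hasTwin_apply (φ : G ≃g G') {v : V} : G'.HasTwin (φ v) ↔ G.HasTwin v := by
  refine ⟨fun ⟨w, hne, h⟩ => ⟨φ.symm w, ?_, ?_⟩, fun ⟨w, hne, h⟩ => ⟨φ w, ?_, ?_⟩⟩
  · rw [Ne, φ.symm_apply_eq]; exact hne
  · rwa [← φ.neighborSet_eq_iff, φ.apply_symm_apply]
  · exact φ.injective.ne hne
  · exact φ.neighborSet_eq_iff.2 h

theorem Iso.card_neighborSet_apply (φ : G ≃g G') (v : V) :
    Nat.card (G'.neighborSet (φ v)) = Nat.card (G.neighborSet v) :=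
  Nat.card_congr (φ.mapNeighborSet v).symm

def Iso.autCongr (e : G ≃g G') : (G ≃g G) ≃* (G' ≃g G') where
  toFun φ := (e.symm.trans φ).trans e
  invFun ψ := (e.trans ψ).trans e.symm
  left_inv φ := RelIso.ext fun v => by simp
  right_inv ψ := RelIso.ext fun v => by simp
  map_mul' φ ψ := RelIso.ext fun v => by simp

end SimpleGraph

open Finset
open scoped symmDiff

namespace Finset

variable {α β : Type*} [DecidableEq α] [DecidableEq β] {m : ℕ}

theorem card_inter_lt_of_ne {T T' : Finset α} (hcard : #T = #T') (hne : T ≠ T') :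
    #(T ∩ T') < #T := by
  refine card_lt_card (inter_subset_left.ssubset_of_ne fun h => hne ?_)
  exact eq_of_subset_of_card_le (h ▸ inter_subset_right) hcard.ge

theorem inter_eq_of_card_eq_succ {W T T' : Finset α} (hW : #W = m) (hT : #T = m + 1)
    (hT' : #T' = m + 1) (hWT : W ⊆ T) (hWT' : W ⊆ T') (hne : T ≠ T') : T ∩ T' = W := by
  have := card_inter_lt_of_ne (hT.trans hT'.symm) hne
  exact (eq_of_subset_of_card_le (subset_inter hWT hWT') (by omega)).symm

theorem card_union_eq_iff_card_inter_eq {T T' : Finset α} (hT : #T = m + 1)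
    (hT' : #T' = m + 1) : #(T ∪ T') = m + 2 ↔ #(T ∩ T') = m := by
  have := card_union_add_card_inter T T'
  omega

theorem union_eq_of_card_eq_succ {T T' R : Finset α} (hT : #T = m + 1) (hT' : #T' = m + 1)
    (hR : #R = m + 2) (hTR : T ⊆ R) (hT'R : T' ⊆ R) (hne : T ≠ T') : T ∪ T' = R := by
  have := card_inter_lt_of_ne (hT.trans hT'.symm) hne
  have := card_union_add_card_inter T T'
  exact eq_of_subset_of_card_le (union_subset hTR hT'R) (by omega)

theorem exists_common_subset_of_not_subset_union {T₁ T₂ T₃ : Finset α} (h₁ : #T₁ = m + 1)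
    (h₂ : #T₂ = m + 1) (h₃ : #T₃ = m + 1) (h₁₃ : #(T₁ ∪ T₃) = m + 2)
    (h₂₃ : #(T₂ ∪ T₃) = m + 2) (hsub : ¬T₃ ⊆ T₁ ∪ T₂) :
    ∃ W, #W = m ∧ W ⊆ T₁ ∧ W ⊆ T₂ ∧ W ⊆ T₃ := by
  obtain ⟨z, hz₃, hz⟩ := not_subset.1 hsub
  rw [mem_union, not_or] at hz
  have herase : #(T₃.erase z) = m := by rw [card_erase_of_mem hz₃, h₃]; rfl
  have key : ∀ T, #T = m + 1 → #(T ∪ T₃) = m + 2 → z ∉ T → T₃.erase z ⊆ T := by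
    intro T hT hTT₃ hzT
    have hinter : #(T₃ ∩ T) = m := by
      rwa [← card_union_eq_iff_card_inter_eq h₃ hT, union_comm]
    have : T₃ ∩ T = T₃.erase z := eq_of_subset_of_card_le
      (fun x hx => mem_erase.2 ⟨fun h => hzT (h ▸ (mem_inter.1 hx).2), (mem_inter.1 hx).1⟩)
      (by omega)
    exact this ▸ inter_subset_right
  exact ⟨T₃.erase z, herase, key T₁ h₁ h₁₃ hz.1, key T₂ h₂ h₂₃ hz.2, erase_subset _ _⟩

theorem eq_or_eq_of_subset_union {W T T₁ T₂ : Finset α} (hW : #W = m) (hT : #T = m + 1)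
    (h₁ : #T₁ = m + 1) (h₂ : #T₂ = m + 1) (hinter : T₁ ∩ T₂ = W) (hWT : W ⊆ T)
    (hsub : T ⊆ T₁ ∪ T₂) : T = T₁ ∨ T = T₂ := by
  obtain ⟨x, -, rfl⟩ := exists_eq_insert_iff.2 ⟨hWT, by omega⟩
  have hW₁ : W ⊆ T₁ := hinter ▸ inter_subset_left
  have hW₂ : W ⊆ T₂ := hinter ▸ inter_subset_right
  rcases mem_union.1 (hsub (mem_insert_self x W)) with hx | hx
  · exact .inl (eq_of_subset_of_card_le (insert_subset hx hW₁) (by omega))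
  · exact .inr (eq_of_subset_of_card_le (insert_subset hx hW₂) (by omega))

theorem exists_symmDiff_eq_singleton_iff {s t : Finset α} :
    (∃ y, s ∆ t = {y}) ↔ s ⊆ t ∧ #t = #s + 1 ∨ t ⊆ s ∧ #s = #t + 1 := by
  rw [← card_eq_one, symmDiff_def, sup_eq_union, card_union_of_disjoint disjoint_sdiff_sdiff,
    ← sdiff_eq_empty_iff_subset, ← sdiff_eq_empty_iff_subset (s := t), ← card_eq_zero,
    ← card_eq_zero]
  have := card_sdiff_add_card_inter s t
  have := card_sdiff_add_card_inter t s
  rw [inter_comm] at this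
  omega

theorem disjSum_symmDiff_disjSum (s s' : Finset α) (t t' : Finset β) :
    s.disjSum t ∆ s'.disjSum t' = (s ∆ s').disjSum (t ∆ t') := by
  ext (_ | _) <;> simp [mem_symmDiff]

variable [Fintype α]

theorem exists_ne_supersets {W : Finset α} (hW : #W = m) (hm : m + 2 ≤ Fintype.card α) :
    ∃ T₁ T₂ : Finset α, T₁ ≠ T₂ ∧ #T₁ = m + 1 ∧ #T₂ = m + 1 ∧ W ⊆ T₁ ∧ W ⊆ T₂ := by
  obtain ⟨x, hx, y, hy, hxy⟩ := one_lt_card.1 (show 1 < #Wᶜ by rw [card_compl]; omega)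
  rw [mem_compl] at hx hy
  refine ⟨insert x W, insert y W, fun h => ?_, by rw [card_insert_of_notMem hx, hW],
    by rw [card_insert_of_notMem hy, hW], subset_insert _ _, subset_insert _ _⟩
  have := h ▸ mem_insert_self x W
  exact (mem_insert.1 this).elim hxy hx

theorem eq_of_forall_subset_iff {W W' : Finset α} (hW : #W = m) (hW' : #W' = m)
    (hm : m + 2 ≤ Fintype.card α)
    (h : ∀ T : Finset α, #T = m + 1 → (W ⊆ T ↔ W' ⊆ T)) : W = W' := by
  obtain ⟨T₁, T₂, hne, h₁, h₂, hW₁, hW₂⟩ := exists_ne_supersets hW hm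
  have : W' ⊆ W := inter_eq_of_card_eq_succ hW h₁ h₂ hW₁ hW₂ hne ▸
    subset_inter ((h T₁ h₁).1 hW₁) ((h T₂ h₂).1 hW₂)
  exact (eq_of_subset_of_card_le this (by omega)).symm

end Finset

theorem Equiv.Perm.eq_one_of_forall_image_eq {α : Type*} [DecidableEq α] [Fintype α]
    {σ : Equiv.Perm α} {j : ℕ} (hj : j + 2 ≤ Fintype.card α)
    (h : ∀ T : Finset α, #T = j + 1 → T.image σ = T) : σ = 1 := by
  refine Equiv.ext fun y => by_contra fun hy => ?_
  rw [Equiv.Perm.one_apply] at hy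
  obtain ⟨V, hV, hVcard⟩ := exists_subset_card_eq (s := {y, σ y}ᶜ) (n := j) (by
    rw [card_compl, card_pair (Ne.symm hy)]; omega)
  have hyV : y ∉ V := fun h => by simpa using hV h
  have hσyV : σ y ∉ V := fun h => by simpa using hV h
  have hT := h (insert y V) (by rw [card_insert_of_notMem hyV, hVcard])
  have : σ y ∈ insert y V := hT ▸ mem_image_of_mem σ (mem_insert_self y V)
  rcases mem_insert.1 this with h | h
  exacts [hy h, hσyV h]

theorem ZMod.eq_one_add_of_ne {x y : ZMod 2} (h : x ≠ y) : y = 1 + x := by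
  revert x y
  decide

theorem tokenGraph_completeBipartiteGraph_adj {α β : Type*} [DecidableEq α] [DecidableEq β]
    {k : ℕ} {s s' : Finset α} {t t' : Finset β} (h : #(s.disjSum t) = k)
    (h' : #(s'.disjSum t') = k) :
    (tokenGraph (completeBipartiteGraph α β) k).Adj ⟨_, h⟩ ⟨_, h'⟩ ↔
      (∃ i, s ∆ s' = {i}) ∧ ∃ y, t ∆ t' = {y} := by
  have hpair (i : α) (y : β) :
      ({.inl i, .inr y} : Finset (α ⊕ β)) = ({i} : Finset α).disjSum {y} := by
    ext (_ | _) <;> simp [eq_comm]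
  change (∃ a b, _ ∧ _) ↔ _
  simp only [disjSum_symmDiff_disjSum]
  constructor
  · rintro ⟨i | y, j | z, hadj, h⟩ <;>
      simp only [completeBipartiteGraph_adj, Sum.isLeft_inl, Sum.isLeft_inr, Sum.isRight_inl,
        Sum.isRight_inr, Bool.false_eq_true, and_false, and_true, and_self, or_self, or_false,
        or_true] at hadj
    · rw [hpair, disjSum_inj] at h
      exact ⟨⟨i, h.1⟩, z, h.2⟩
    · rw [pair_comm, hpair, disjSum_inj] at h
      exact ⟨⟨j, h.1⟩, y, h.2⟩
  · rintro ⟨⟨i, hi⟩, y, hy⟩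
    exact ⟨.inl i, .inr y, by simp, by rw [hi, hy, hpair]⟩

abbrev Layer (α : Type*) (j : ℕ) := {S : Finset α // #S = j}

@[simp] theorem Layer.card_coe {α : Type*} {j : ℕ} (S : Layer α j) : #S.1 = j := S.2

def SubsetCompatible {α : Type*} {i j : ℕ} (b : Layer α i ≃ Layer α i)
    (c : Layer α j ≃ Layer α j) : Prop :=
  ∀ T S, T.1 ⊆ S.1 ↔ (b T).1 ⊆ (c S).1

namespace SubsetCompatible

variable {α : Type*} {m : ℕ}

theorem symm {i j : ℕ} {b : Layer α i ≃ Layer α i} {c : Layer α j ≃ Layer α j}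
    (h : SubsetCompatible b c) : SubsetCompatible b.symm c.symm := fun T S => by
  simpa using (h (b.symm T) (c.symm S)).symm

variable [DecidableEq α]

theorem union_apply {b : Layer α (m + 1) ≃ Layer α (m + 1)}
    {c : Layer α (m + 2) ≃ Layer α (m + 2)} (hbc : SubsetCompatible b c)
    {T T' : Layer α (m + 1)} (hne : T ≠ T')
    (hU : #(T.1 ∪ T'.1) = m + 2) : (b T).1 ∪ (b T').1 = (c ⟨_, hU⟩).1 :=
  union_eq_of_card_eq_succ (b T).2 (b T').2 (c _).2 ((hbc T _).1 subset_union_left)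
    ((hbc T' _).1 subset_union_right) fun h => hne (b.injective (Subtype.ext h))

/-- `b` maps the star `{T ⊇ W}` into a star. -/
theorem inter_apply_subset {b : Layer α (m + 1) ≃ Layer α (m + 1)}
    {c : Layer α (m + 2) ≃ Layer α (m + 2)} (hbc : SubsetCompatible b c)
    {W : Finset α} (hW : #W = m)
    {T₁ T₂ T : Layer α (m + 1)} (h₁₂ : T₁ ≠ T₂) (hW₁ : W ⊆ T₁.1) (hW₂ : W ⊆ T₂.1)
    (hWT : W ⊆ T.1) :
    #((b T₁).1 ∩ (b T₂).1) = m ∧ (b T₁).1 ∩ (b T₂).1 ⊆ (b T).1 := by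
  have hunion : ∀ {T T' : Layer α (m + 1)}, T ≠ T' → W ⊆ T.1 → W ⊆ T'.1 →
      #(T.1 ∪ T'.1) = m + 2 := fun {T T'} hne hWT hWT' =>
    (card_union_eq_iff_card_inter_eq T.2 T'.2).2 <| by
      rw [inter_eq_of_card_eq_succ hW T.2 T'.2 hWT hWT' (Subtype.coe_ne_coe.2 hne), hW]
  have himage : ∀ {T T' : Layer α (m + 1)}, T ≠ T' → W ⊆ T.1 → W ⊆ T'.1 →
      #((b T).1 ∪ (b T').1) = m + 2 := fun hne hWT hWT' => by
    rw [hbc.union_apply hne (hunion hne hWT hWT')]; exact (c _).2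
  have hcard := (card_union_eq_iff_card_inter_eq (b T₁).2 (b T₂).2).1 (himage h₁₂ hW₁ hW₂)
  refine ⟨hcard, ?_⟩
  obtain rfl | h₁ := eq_or_ne T T₁
  · exact inter_subset_left
  obtain rfl | h₂ := eq_or_ne T T₂
  · exact inter_subset_right
  -- `b T ⊆ b T₁ ∪ b T₂ = c (T₁ ∪ T₂)` would pull back to `T ⊆ T₁ ∪ T₂`, forcing `T ∈ {T₁, T₂}`.
  by_cases hsub : (b T).1 ⊆ (b T₁).1 ∪ (b T₂).1
  · rw [hbc.union_apply h₁₂ (hunion h₁₂ hW₁ hW₂), ← hbc] at hsub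
    rcases eq_or_eq_of_subset_union hW T.2 T₁.2 T₂.2
      (inter_eq_of_card_eq_succ hW T₁.2 T₂.2 hW₁ hW₂ (Subtype.coe_ne_coe.2 h₁₂)) hWT hsub
      with h | h
    exacts [absurd (Subtype.ext h) h₁, absurd (Subtype.ext h) h₂]
  · obtain ⟨W', hW', hW'₁, hW'₂, hW'T⟩ := exists_common_subset_of_not_subset_union (b T₁).2
      (b T₂).2 (b T).2 (himage h₁.symm hW₁ hWT) (himage h₂.symm hW₂ hWT) hsub
    rwa [← eq_of_subset_of_card_le (subset_inter hW'₁ hW'₂) (by omega)]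

theorem eq_image_of_eq_image_left {b : Layer α (m + 1) ≃ Layer α (m + 1)}
    {c : Layer α (m + 2) ≃ Layer α (m + 2)} (hbc : SubsetCompatible b c) (σ : Equiv.Perm α)
    (hb : ∀ T, (b T).1 = T.1.image σ) (S : Layer α (m + 2)) : (c S).1 = S.1.image σ := by
  refine (eq_of_subset_of_card_le (fun x hx => ?_) ?_).symm
  · obtain ⟨y, hy, rfl⟩ := mem_image.1 hx
    obtain ⟨z, hz, hzy⟩ := exists_mem_ne (by rw [S.2]; omega : 1 < #S.1) y
    have hT : #(S.1.erase z) = m + 1 := by rw [card_erase_of_mem hz, S.2]; rfl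
    refine (hbc ⟨_, hT⟩ S).1 (erase_subset _ _) ?_
    rw [hb]
    exact mem_image_of_mem _ (mem_erase.2 ⟨hzy.symm, hy⟩)
  · rw [card_image_of_injective _ σ.injective, S.2, (c S).2]

theorem eq_image_of_eq_image_right [Fintype α] {b : Layer α m ≃ Layer α m}
    {c : Layer α (m + 1) ≃ Layer α (m + 1)} (hm : m + 2 ≤ Fintype.card α)
    (hbc : SubsetCompatible b c) (σ : Equiv.Perm α) (hc : ∀ S, (c S).1 = S.1.image σ)
    (T : Layer α m) : (b T).1 = T.1.image σ := by
  obtain ⟨T₁, T₂, hne, h₁, h₂, hT₁, hT₂⟩ := exists_ne_supersets T.2 hm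
  have hsub : ∀ (S : Finset α) (hS : #S = m + 1), T.1 ⊆ S → (b T).1 ⊆ S.image σ :=
    fun S hS hTS => hc ⟨S, hS⟩ ▸ (hbc T ⟨S, hS⟩).1 hTS
  refine eq_of_subset_of_card_le ?_
    (by rw [card_image_of_injective _ σ.injective, T.2, (b T).2])
  rw [← inter_eq_of_card_eq_succ T.2 h₁ h₂ hT₁ hT₂ hne, image_inter _ _ σ.injective]
  exact subset_inter (hsub T₁ h₁ hT₁) (hsub T₂ h₂ hT₂)

theorem exists_star_image [Fintype α] {b : Layer α (m + 1) ≃ Layer α (m + 1)}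
    {c : Layer α (m + 2) ≃ Layer α (m + 2)} (hm : m + 2 ≤ Fintype.card α)
    (hbc : SubsetCompatible b c) (W : Layer α m) :
    ∃ W' : Layer α m, ∀ T : Layer α (m + 1), W.1 ⊆ T.1 ↔ W'.1 ⊆ (b T).1 := by
  obtain ⟨T₁, T₂, hne, h₁, h₂, hW₁, hW₂⟩ := exists_ne_supersets W.2 hm
  have hne' : (⟨T₁, h₁⟩ : Layer α (m + 1)) ≠ ⟨T₂, h₂⟩ := fun h => hne (congrArg Subtype.val h)
  have hstar := fun T => hbc.inter_apply_subset W.2 hne' hW₁ hW₂ (T := T)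
  refine ⟨⟨_, (hstar ⟨T₁, h₁⟩ hW₁).1⟩, fun T => ⟨fun hWT => (hstar T hWT).2, fun h => ?_⟩⟩
  have := hbc.symm.inter_apply_subset (hstar ⟨T₁, h₁⟩ hW₁).1 (b.injective.ne hne')
    inter_subset_left inter_subset_right h
  simp only [Equiv.symm_apply_apply] at this
  exact inter_eq_of_card_eq_succ W.2 h₁ h₂ hW₁ hW₂ hne ▸ this.2

theorem exists_subsetCompatible_below [Fintype α] {b : Layer α (m + 1) ≃ Layer α (m + 1)}
    {c : Layer α (m + 2) ≃ Layer α (m + 2)} (hm : m + 2 ≤ Fintype.card α)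
    (hbc : SubsetCompatible b c) : ∃ a : Layer α m ≃ Layer α m, SubsetCompatible a b := by
  choose a ha using hbc.exists_star_image hm
  have hinj : Function.Injective a := fun W W' h => Subtype.ext <|
    eq_of_forall_subset_iff W.2 W'.2 hm fun T hT => by rw [ha W ⟨T, hT⟩, ha W' ⟨T, hT⟩, h]
  exact ⟨.ofBijective a (Finite.injective_iff_bijective.1 hinj), ha⟩

theorem exists_perm [Fintype α] (hm : m + 1 ≤ Fintype.card α) {b : Layer α m ≃ Layer α m}
    {c : Layer α (m + 1) ≃ Layer α (m + 1)} (hbc : SubsetCompatible b c) :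
    ∃ σ : Equiv.Perm α, (∀ T, (b T).1 = T.1.image σ) ∧ ∀ S, (c S).1 = S.1.image σ := by
  induction m with
  | zero =>
    choose u hu using fun S : Layer α 1 => card_eq_one.1 S.2
    let e (x : α) : Layer α 1 := ⟨{x}, card_singleton x⟩
    have hinj : Function.Injective fun x => u (c (e x)) := fun x y h => by
      have : c (e x) = c (e y) := Subtype.ext <| by
        rw [hu (c (e x)), hu (c (e y))]
        exact congrArg _ h
      exact singleton_injective (congrArg Subtype.val (c.injective this))
    refine ⟨.ofBijective _ (Finite.injective_iff_bijective.1 hinj), fun T => ?_, fun S => ?_⟩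
    · rw [card_eq_zero.1 (b T).2, card_eq_zero.1 T.2, image_empty]
    · obtain ⟨x, hx⟩ := card_eq_one.1 S.2
      obtain rfl : S = e x := Subtype.ext hx
      simp [e, hu]
  | succ m ih =>
    obtain ⟨a, hab⟩ := hbc.exists_subsetCompatible_below hm
    obtain ⟨σ, -, hb⟩ := ih (by omega) hab
    exact ⟨σ, hb, hbc.eq_image_of_eq_image_left σ hb⟩

end SubsetCompatible

/-- A token of the `(a+2)`-token graph of `K_{2,α}`, recorded by its trace on `α` and sorted by
its trace on the two-element side: empty (`top`), one of the two points (`mid`), or both (`bot`). -/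
inductive TriLayer (α : Type*) (a : ℕ)
  | top (S : Layer α (a + 2))
  | mid (i : ZMod 2) (T : Layer α (a + 1))
  | bot (U : Layer α a)

def TriLayer.Adj {α : Type*} {a : ℕ} : TriLayer α a → TriLayer α a → Prop
  | top S, mid _ T | mid _ T, top S => T.1 ⊆ S.1
  | mid _ T, bot U | bot U, mid _ T => U.1 ⊆ T.1
  | _, _ => False

def triLayerGraph (α : Type*) (a : ℕ) : SimpleGraph (TriLayer α a) where
  Adj := TriLayer.Adj
  symm := ⟨by rintro (_ | _ | _) (_ | _ | _) h <;> exact h⟩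
  loopless := ⟨by rintro (_ | _ | _) h <;> exact h⟩

@[simp] theorem triLayerGraph_adj {α : Type*} {a : ℕ} (v w : TriLayer α a) :
    (triLayerGraph α a).Adj v w ↔ v.Adj w := Iff.rfl

namespace TriLayer

variable {α : Type*} {a : ℕ}

def label : TriLayer α a → Finset (Fin 2)
  | top _ => ∅
  | mid i _ => {(ZMod.finEquiv 2).symm i}
  | bot _ => univ

def carrier : TriLayer α a → Finset α
  | top S => S.1
  | mid _ T => T.1
  | bot U => U.1

theorem card_label_add_card_carrier (v : TriLayer α a) : #(label v) + #(carrier v) = a + 2 := by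
  cases v <;>
    simp only [label, carrier, card_empty, card_singleton, card_univ, Fintype.card_fin,
      Layer.card_coe] <;> omega

theorem adj_iff_label_carrier [DecidableEq α] (v w : TriLayer α a) :
    (triLayerGraph α a).Adj v w ↔
      (∃ i, label v ∆ label w = {i}) ∧ ∃ y, carrier v ∆ carrier w = {y} := by
  cases v <;> cases w <;> simp [Adj, label, carrier, exists_symmDiff_eq_singleton_iff, add_assoc]

def toToken (v : TriLayer α a) : {A : Finset (Fin 2 ⊕ α) // #A = a + 2} :=
  ⟨(label v).disjSum (carrier v), by rw [card_disjSum, card_label_add_card_carrier]⟩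

theorem toToken_injective : Function.Injective (toToken (α := α) (a := a)) := by
  intro v w h
  obtain ⟨hl, hc⟩ := disjSum_inj.1 (congrArg Subtype.val h)
  have hcard := congrArg card hl
  cases v <;> cases w <;>
    simp only [label, carrier, card_empty, card_singleton, card_univ, Fintype.card_fin,
      singleton_inj, EmbeddingLike.apply_eq_iff_eq, top.injEq, mid.injEq, bot.injEq,
      Subtype.ext_iff, zero_ne_one, one_ne_zero, OfNat.zero_ne_ofNat, OfNat.ofNat_ne_zero,
      OfNat.one_ne_ofNat, OfNat.ofNat_ne_one] at hcard hl hc ⊢ <;>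
    simp [*]

theorem toToken_surjective : Function.Surjective (toToken (α := α) (a := a)) := by
  rintro ⟨A, hA⟩
  have hcard := card_toLeft_add_card_toRight (u := A)
  suffices ∃ v : TriLayer α a, label v = A.toLeft ∧ carrier v = A.toRight by
    obtain ⟨v, hl, hc⟩ := this
    exact ⟨v, Subtype.ext (by simp [toToken, hl, hc, toLeft_disjSum_toRight])⟩
  obtain hL | ⟨i, hL⟩ | hL : A.toLeft = ∅ ∨ (∃ i : ZMod 2, A.toLeft = {(ZMod.finEquiv 2).symm i}) ∨
      A.toLeft = univ := by
    generalize A.toLeft = L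
    revert L
    decide
  · exact ⟨top ⟨A.toRight, by simp only [hL, card_empty] at hcard; omega⟩, hL.symm, rfl⟩
  · exact ⟨mid i ⟨A.toRight, by simp only [hL, card_singleton] at hcard; omega⟩, hL.symm, rfl⟩
  · exact ⟨bot ⟨A.toRight, by simp only [hL, card_univ, Fintype.card_fin] at hcard; omega⟩,
      hL.symm, rfl⟩

variable (α a) in
noncomputable def tokenGraphIso [DecidableEq α] :
    triLayerGraph α a ≃g tokenGraph (completeBipartiteGraph (Fin 2) α) (a + 2) where
  toEquiv := .ofBijective toToken ⟨toToken_injective, toToken_surjective⟩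
  map_rel_iff' {v w} := by
    rw [adj_iff_label_carrier]
    exact tokenGraph_completeBipartiteGraph_adj _ _


theorem neighborSet_mid_eq (i j : ZMod 2) (T : Layer α (a + 1)) :
    (triLayerGraph α a).neighborSet (mid i T) = (triLayerGraph α a).neighborSet (mid j T) := by
  ext (_ | _ | _) <;> rfl

theorem hasTwin_mid (i : ZMod 2) (T : Layer α (a + 1)) :
    (triLayerGraph α a).HasTwin (mid i T) :=
  ⟨mid (i + 1) T, by simp, neighborSet_mid_eq _ _ T⟩

theorem hasTwin_of_apply_eq_mid (φ : triLayerGraph α a ≃g triLayerGraph α a)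
    {v : TriLayer α a} {j : ZMod 2} {T : Layer α (a + 1)} (hφ : φ v = mid j T) :
    (triLayerGraph α a).HasTwin v :=
  φ.hasTwin_apply.1 (hφ ▸ hasTwin_mid j T)

variable [DecidableEq α]

theorem card_neighborSet_top (S : Layer α (a + 2)) :
    Nat.card ((triLayerGraph α a).neighborSet (top S)) = 2 * (a + 2) := by
  let f (p : ZMod 2 × S.1) : TriLayer α a :=
    mid p.1 ⟨S.1.erase p.2, by rw [card_erase_of_mem p.2.2, S.2]; rfl⟩
  have hf : Function.Injective f := by
    rintro ⟨i, x, hx⟩ ⟨j, y, hy⟩ h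
    simp only [f, mid.injEq, Subtype.mk.injEq] at h
    exact Prod.ext h.1 (Subtype.ext (S.1.erase_injOn hx hy h.2))
  have hrange : Set.range f = (triLayerGraph α a).neighborSet (top S) := by
    ext (_ | ⟨i, T⟩ | _)
    · simp [f, Adj]
    · simp only [Set.mem_range, SimpleGraph.mem_neighborSet, triLayerGraph_adj, Adj, f,
        mid.injEq]
      constructor
      · rintro ⟨⟨_, x, hx⟩, rfl, rfl⟩
        exact erase_subset _ _
      · intro hTS
        obtain ⟨x, hxT, hx⟩ := exists_eq_insert_iff.2 ⟨hTS, by rw [T.2, S.2]⟩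
        refine ⟨⟨i, x, hx ▸ mem_insert_self x T.1⟩, rfl, Subtype.ext ?_⟩
        simp [← hx, erase_insert hxT]
    · simp [f, Adj]
  rw [← hrange, Nat.card_range_of_injective hf, Nat.card_prod, Nat.card_zmod,
    Nat.card_eq_fintype_card, Fintype.card_coe, S.2]

theorem card_neighborSet_bot [Fintype α] (U : Layer α a) :
    Nat.card ((triLayerGraph α a).neighborSet (bot U)) = 2 * (Fintype.card α - a) := by
  let f (p : ZMod 2 × (U.1ᶜ : Finset α)) : TriLayer α a :=
    mid p.1 ⟨insert p.2.1 U.1, by rw [card_insert_of_notMem (mem_compl.1 p.2.2), U.2]⟩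
  have hf : Function.Injective f := by
    rintro ⟨i, x, hx⟩ ⟨j, y, hy⟩ h
    simp only [f, mid.injEq, Subtype.mk.injEq] at h
    exact Prod.ext h.1 (Subtype.ext ((insert_inj (mem_compl.1 hx)).1 h.2))
  have hrange : Set.range f = (triLayerGraph α a).neighborSet (bot U) := by
    ext (_ | ⟨i, T⟩ | _)
    · simp [f, Adj]
    · simp only [Set.mem_range, SimpleGraph.mem_neighborSet, triLayerGraph_adj, Adj, f,
        mid.injEq]
      constructor
      · rintro ⟨⟨_, x, hx⟩, rfl, rfl⟩
        exact subset_insert _ _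
      · intro hUT
        obtain ⟨x, hxU, hx⟩ := exists_eq_insert_iff.2 ⟨hUT, by rw [T.2, U.2]⟩
        exact ⟨⟨i, x, mem_compl.2 hxU⟩, rfl, Subtype.ext hx⟩
    · simp [f, Adj]
  rw [← hrange, Nat.card_range_of_injective hf, Nat.card_prod, Nat.card_zmod,
    Nat.card_eq_fintype_card, Fintype.card_coe, card_compl, U.2]

variable [Fintype α]

theorem not_hasTwin_top (h3 : 3 ≤ Fintype.card α) (S : Layer α (a + 2)) :
    ¬(triLayerGraph α a).HasTwin (top S) := by
  rintro ⟨w, hne, h⟩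
  have hadj (u) : (triLayerGraph α a).Adj (top S) u ↔ (triLayerGraph α a).Adj w u :=
    Set.ext_iff.1 h.symm u
  rcases w with S' | ⟨i, T⟩ | U
  · obtain ⟨x, hxS, hxS'⟩ := not_subset.1 fun hsub =>
      hne (congrArg top (Subtype.ext (eq_of_subset_of_card_le hsub (by rw [S.2, S'.2])).symm))
    obtain ⟨z, hz, hzx⟩ := exists_mem_ne (by rw [S.2]; omega : 1 < #S.1) x
    have hT : #(S.1.erase z) = a + 1 := by rw [card_erase_of_mem hz, S.2]; rfl
    have : S.1.erase z ⊆ S'.1 := by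
      simpa [Adj] using (hadj (mid 0 ⟨_, hT⟩)).1 (by simpa [Adj] using erase_subset z S.1)
    exact hxS' (this (mem_erase.2 ⟨hzx.symm, hxS⟩))
  · obtain ⟨U, hUT, hU⟩ := exists_subset_card_eq (by rw [T.2]; omega : a ≤ #T.1)
    simpa [Adj] using (hadj (bot ⟨U, hU⟩)).2 (by simpa [Adj] using hUT)
  · have hsub (T : Layer α (a + 1)) : T.1 ⊆ S.1 ↔ U.1 ⊆ T.1 := by
      simpa [Adj] using hadj (mid 0 T)
    obtain ⟨T₀, hT₀S, hT₀⟩ := exists_subset_card_eq (by rw [S.2]; omega : a + 1 ≤ #S.1)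
    have hUS : U.1 ⊆ S.1 := ((hsub ⟨T₀, hT₀⟩).1 hT₀S).trans hT₀S
    by_cases hS : ∃ x, x ∉ S.1
    · obtain ⟨x, hx⟩ := hS
      have hT : #(insert x U.1) = a + 1 := by
        rw [card_insert_of_notMem fun h => hx (hUS h), U.2]
      exact hx ((hsub ⟨_, hT⟩).2 (subset_insert _ _) (mem_insert_self x U.1))
    · simp only [not_exists, not_not] at hS
      have hcard : Fintype.card α = a + 2 := by
        rw [← S.2, eq_univ_of_forall hS, card_univ]
      obtain ⟨u, hu⟩ := card_pos.1 (by rw [U.2]; omega : 0 < #U.1)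
      have hT : #(S.1.erase u) = a + 1 := by rw [card_erase_of_mem (hUS hu), S.2]; rfl
      exact notMem_erase u S.1 ((hsub ⟨_, hT⟩).1 (erase_subset _ _) hu)

theorem not_hasTwin_bot (h3 : 3 ≤ Fintype.card α) (han : a + 2 ≤ Fintype.card α)
    (U : Layer α a) : ¬(triLayerGraph α a).HasTwin (bot U) := by
  rintro ⟨w, hne, h⟩
  have hadj (u) : (triLayerGraph α a).Adj (bot U) u ↔ (triLayerGraph α a).Adj w u :=
    Set.ext_iff.1 h.symm u
  rcases w with S | ⟨i, T⟩ | U'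
  · exact not_hasTwin_top h3 S ⟨bot U, hne.symm, h.symm⟩
  · obtain ⟨S, hTS, hS⟩ := exists_superset_card_eq (by rw [T.2]; omega : #T.1 ≤ a + 2) han
    simpa [Adj] using (hadj (top ⟨S, hS⟩)).2 (by simpa [Adj] using hTS)
  · obtain ⟨x, hxU, hxU'⟩ := not_subset.1 fun hsub =>
      hne (congrArg bot (Subtype.ext (eq_of_subset_of_card_le hsub (by rw [U.2, U'.2])).symm))
    obtain ⟨y, -, hy⟩ := exists_mem_notMem_of_card_lt_card (s := insert x U'.1) (t := univ)
      (by rw [card_univ, card_insert_of_notMem hxU', U'.2]; omega)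
    rw [mem_insert, not_or] at hy
    have hT : #(insert y U'.1) = a + 1 := by rw [card_insert_of_notMem hy.2, U'.2]
    have : U.1 ⊆ insert y U'.1 := by
      simpa [Adj] using (hadj (mid 0 ⟨_, hT⟩)).2 (by simp [Adj])
    rcases mem_insert.1 (this hxU) with rfl | hx
    exacts [hy.1 rfl, hxU' hx]

theorem eq_of_neighborSet_mid_eq (h3 : 3 ≤ Fintype.card α) {i j : ZMod 2}
    {T T' : Layer α (a + 1)}
    (h : (triLayerGraph α a).neighborSet (mid i T) =
      (triLayerGraph α a).neighborSet (mid j T')) : T = T' := by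
  have hadj (u) : (triLayerGraph α a).Adj (mid i T) u ↔ (triLayerGraph α a).Adj (mid j T') u :=
    Set.ext_iff.1 h u
  by_contra hne
  obtain ⟨x, hxT', hxT⟩ := not_subset.1 fun hsub =>
    hne (Subtype.ext (eq_of_subset_of_card_le hsub (by rw [T.2, T'.2])).symm)
  by_cases hS : ∃ y, y ∉ insert x T.1
  · obtain ⟨y, hy⟩ := hS
    rw [mem_insert, not_or] at hy
    have hS : #(insert y T.1) = a + 2 := by rw [card_insert_of_notMem hy.2, T.2]
    have : T'.1 ⊆ insert y T.1 := by
      simpa [Adj] using (hadj (top ⟨_, hS⟩)).1 (by simp [Adj])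
    rcases mem_insert.1 (this hxT') with rfl | hx
    exacts [hy.1 rfl, hxT hx]
  · simp only [not_exists, not_not] at hS
    have hcard : Fintype.card α = a + 2 := by
      rw [← card_univ, ← eq_univ_of_forall hS, card_insert_of_notMem hxT, T.2]
    obtain ⟨z, hz, hzx⟩ := exists_mem_ne (by rw [T'.2]; omega : 1 < #T'.1) x
    have hU : #(T'.1.erase z) = a := by rw [card_erase_of_mem hz, T'.2]; rfl
    have : T'.1.erase z ⊆ T.1 := by
      simpa [Adj] using (hadj (bot ⟨_, hU⟩)).2 (by simpa [Adj] using erase_subset z T'.1)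
    exact hxT (this (mem_erase.2 ⟨hzx.symm, hxT'⟩))

theorem exists_apply_top (h3 : 3 ≤ Fintype.card α) (hne : Fintype.card α ≠ 2 * a + 2)
    (φ : triLayerGraph α a ≃g triLayerGraph α a) (S : Layer α (a + 2)) :
    ∃ S', φ (top S) = top S' := by
  rcases hφ : φ (top S) with S' | ⟨j, T'⟩ | U'
  · exact ⟨S', rfl⟩
  · exact absurd (hasTwin_of_apply_eq_mid φ hφ) (not_hasTwin_top h3 S)
  · have := φ.card_neighborSet_apply (top S)
    rw [hφ, card_neighborSet_top, card_neighborSet_bot] at this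
    omega

theorem exists_apply_bot (h3 : 3 ≤ Fintype.card α) (han : a + 2 ≤ Fintype.card α)
    (hne : Fintype.card α ≠ 2 * a + 2) (φ : triLayerGraph α a ≃g triLayerGraph α a)
    (U : Layer α a) : ∃ U', φ (bot U) = bot U' := by
  rcases hφ : φ (bot U) with S' | ⟨j, T'⟩ | U'
  · have := φ.card_neighborSet_apply (bot U)
    rw [hφ, card_neighborSet_top, card_neighborSet_bot] at this
    omega
  · exact absurd (hasTwin_of_apply_eq_mid φ hφ) (not_hasTwin_bot h3 han U)
  · exact ⟨U', rfl⟩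

theorem exists_apply_mid (h3 : 3 ≤ Fintype.card α) (han : a + 2 ≤ Fintype.card α)
    (φ : triLayerGraph α a ≃g triLayerGraph α a) (i : ZMod 2) (T : Layer α (a + 1)) :
    ∃ j T', φ (mid i T) = mid j T' := by
  have htwin := φ.hasTwin_apply.2 (hasTwin_mid i T)
  rcases hφ : φ (mid i T) with S' | ⟨j, T'⟩ | U'
  · exact absurd (hφ ▸ htwin) (not_hasTwin_top h3 S')
  · exact ⟨j, T', rfl⟩
  · exact absurd (hφ ▸ htwin) (not_hasTwin_bot h3 han U')

theorem exists_apply_mid_eq (h3 : 3 ≤ Fintype.card α) (han : a + 2 ≤ Fintype.card α)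
    (φ : triLayerGraph α a ≃g triLayerGraph α a) :
    ∃ (B : Layer α (a + 1) → Layer α (a + 1)) (g : Layer α (a + 1) → ZMod 2),
      Function.Injective B ∧ ∀ i T, φ (mid i T) = mid (i + g T) (B T) := by
  choose j B hB using exists_apply_mid h3 han φ
  have hB₁ (T) : B 1 T = B 0 T := eq_of_neighborSet_mid_eq h3 (i := j 1 T) (j := j 0 T) <| by
    rw [← hB, ← hB, φ.neighborSet_eq_iff]
    exact neighborSet_mid_eq 1 0 T
  have hj (T) : j 1 T = 1 + j 0 T := ZMod.eq_one_add_of_ne fun h => by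
    have := φ.injective ((hB 0 T).trans (by rw [h, ← hB₁, ← hB]))
    simp at this
  refine ⟨B 0, fun T => j 0 T, fun T T' h => ?_, fun i T => ?_⟩
  · refine eq_of_neighborSet_mid_eq h3 (i := 0) (j := 0) ?_
    rw [← φ.neighborSet_eq_iff, hB, hB, h]
    exact neighborSet_mid_eq _ _ _
  · obtain rfl | rfl : i = 0 ∨ i = 1 := by revert i; decide
    · rw [hB, zero_add]
    · rw [hB, hB₁, hj]

theorem exists_layerEquivs (h3 : 3 ≤ Fintype.card α) (han : a + 2 ≤ Fintype.card α)
    (hne : Fintype.card α ≠ 2 * a + 2) (φ : triLayerGraph α a ≃g triLayerGraph α a) :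
    ∃ (A : Layer α (a + 2) ≃ Layer α (a + 2)) (B : Layer α (a + 1) ≃ Layer α (a + 1))
      (C : Layer α a ≃ Layer α a) (g : Layer α (a + 1) → ZMod 2),
      (∀ S, φ (top S) = top (A S)) ∧ (∀ i T, φ (mid i T) = mid (i + g T) (B T)) ∧
        ∀ U, φ (bot U) = bot (C U) := by
  choose A hA using exists_apply_top h3 hne φ
  choose C hC using exists_apply_bot h3 han hne φ
  obtain ⟨B, g, hB_inj, hB⟩ := exists_apply_mid_eq h3 han φ
  have hA_inj : Function.Injective A := fun S S' h => top.inj (φ.injective (by rw [hA, hA, h]))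
  have hC_inj : Function.Injective C := fun U U' h => bot.inj (φ.injective (by rw [hC, hC, h]))
  exact ⟨.ofBijective A (Finite.injective_iff_bijective.1 hA_inj),
    .ofBijective B (Finite.injective_iff_bijective.1 hB_inj),
    .ofBijective C (Finite.injective_iff_bijective.1 hC_inj), g, hA, hB, hC⟩

end TriLayer

abbrev WreathZ2 (n j : ℕ) :=
  (Layer (Fin n) j → Multiplicative (ZMod 2)) ⋊[wreathAction n j] Equiv.Perm (Fin n)

theorem permSubsets_coe {n j : ℕ} (σ : Equiv.Perm (Fin n)) (T : Layer (Fin n) j) :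
    (permSubsets n j σ T).1 = T.1.image σ := rfl

theorem permSubsets_inv {n j : ℕ} (σ : Equiv.Perm (Fin n)) :
    permSubsets n j σ⁻¹ = (permSubsets n j σ).symm := rfl

theorem permSubsets_one {n j : ℕ} (T : Layer (Fin n) j) : permSubsets n j 1 T = T :=
  Subtype.ext (by simp [permSubsets_coe])

theorem permSubsets_mul {n j : ℕ} (σ τ : Equiv.Perm (Fin n)) (T : Layer (Fin n) j) :
    permSubsets n j (σ * τ) T = permSubsets n j σ (permSubsets n j τ T) :=
  Subtype.ext (by simp [permSubsets_coe, image_image])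

namespace TriLayer

variable {α : Type*} {a : ℕ}

def flip (f : Layer α (a + 1) → Multiplicative (ZMod 2)) : TriLayer α a → TriLayer α a
  | top S => top S
  | mid i T => mid (i + (f T).toAdd) T
  | bot U => bot U

theorem flip_flip (f : Layer α (a + 1) → Multiplicative (ZMod 2)) (v : TriLayer α a) :
    flip f (flip f v) = v := by
  cases v <;> simp only [flip, add_assoc, CharTwo.add_self_eq_zero, add_zero]

def flipAut (f : Layer α (a + 1) → Multiplicative (ZMod 2)) :
    triLayerGraph α a ≃g triLayerGraph α a where
  toFun := flip f
  invFun := flip f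
  left_inv := flip_flip f
  right_inv := flip_flip f
  map_rel_iff' {v w} := by cases v <;> cases w <;> rfl

def flipHom :
    (Layer α (a + 1) → Multiplicative (ZMod 2)) →* (triLayerGraph α a ≃g triLayerGraph α a) where
  toFun := flipAut
  map_one' := RelIso.ext fun v => by cases v <;> simp [flipAut, flip]
  map_mul' f g := RelIso.ext fun v => by
    cases v <;> simp only [flipAut, RelIso.coe_fn_mk, Equiv.coe_fn_mk, flip, RelIso.coe_mul,
      Function.comp_apply, Pi.mul_apply, toAdd_mul, mid.injEq, and_true]
    abel

variable {n : ℕ}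

def permMap (σ : Equiv.Perm (Fin n)) : TriLayer (Fin n) a → TriLayer (Fin n) a
  | top S => top (permSubsets n _ σ S)
  | mid i T => mid i (permSubsets n _ σ T)
  | bot U => bot (permSubsets n _ σ U)

def permAut (σ : Equiv.Perm (Fin n)) : triLayerGraph (Fin n) a ≃g triLayerGraph (Fin n) a where
  toFun := permMap σ
  invFun := permMap σ⁻¹
  left_inv v := by cases v <;> simp [permMap, permSubsets_inv]
  right_inv v := by cases v <;> simp [permMap, permSubsets_inv]
  map_rel_iff' {v w} := by
    cases v <;> cases w <;>
      simp [permMap, Adj, permSubsets_coe, image_subset_image_iff σ.injective]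

def permHom : Equiv.Perm (Fin n) →* (triLayerGraph (Fin n) a ≃g triLayerGraph (Fin n) a) where
  toFun := permAut
  map_one' := RelIso.ext fun v => by cases v <;> simp [permAut, permMap, permSubsets_one]
  map_mul' σ τ := RelIso.ext fun v => by cases v <;> simp [permAut, permMap, permSubsets_mul]

theorem permHom_mul_flipHom (σ : Equiv.Perm (Fin n))
    (f : Layer (Fin n) (a + 1) → Multiplicative (ZMod 2)) :
    permHom σ * flipHom f = flipHom (wreathAction n (a + 1) σ f) * permHom σ :=
  RelIso.ext fun v => by
    cases v <;> simp [RelIso.mul_apply, permHom, permAut, permMap, flipHom, flipAut, flip,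
      wreathAction, permSubsets_inv]

def wreathHom (n a : ℕ) :
    WreathZ2 n (a + 1) →* (triLayerGraph (Fin n) a ≃g triLayerGraph (Fin n) a) :=
  SemidirectProduct.lift flipHom permHom fun σ => MonoidHom.ext fun f => by
    simp [MulAut.conj_apply, permHom_mul_flipHom]

theorem wreathHom_apply (x : WreathZ2 n (a + 1)) (v : TriLayer (Fin n) a) :
    wreathHom n a x v = flip x.left (permMap x.right v) := rfl

theorem wreathHom_injective (han : a + 2 ≤ n) : Function.Injective (wreathHom n a) := by
  refine (injective_iff_map_eq_one _).2 fun x hx => ?_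
  have hmid (T : Layer (Fin n) (a + 1)) :
      (x.left (permSubsets n _ x.right T)).toAdd = 0 ∧ permSubsets n _ x.right T = T := by
    simpa [wreathHom_apply, permMap, flip] using congrArg (· (mid 0 T)) hx
  have hσ : x.right = 1 := Equiv.Perm.eq_one_of_forall_image_eq (j := a) (by simpa using han)
    fun T hT => congrArg Subtype.val (hmid ⟨T, hT⟩).2
  refine SemidirectProduct.ext (funext fun T => ?_) hσ
  simpa [hσ, permSubsets_one] using (hmid T).1

theorem wreathHom_surjective (h3 : 3 ≤ n) (han : a + 2 ≤ n) (hne : n ≠ 2 * a + 2) :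
    Function.Surjective (wreathHom n a) := by
  intro φ
  obtain ⟨A, B, C, g, hA, hB, hC⟩ :=
    exists_layerEquivs (by simpa using h3) (by simpa using han) (by simpa using hne) φ
  have hBA : SubsetCompatible B A := fun T S => by
    simpa [hA, hB, Adj] using (φ.map_adj_iff (v := mid 0 T) (w := top S)).symm
  have hCB : SubsetCompatible C B := fun U T => by
    simpa [hC, hB, Adj] using (φ.map_adj_iff (v := bot U) (w := mid 0 T)).symm
  obtain ⟨σ, hBσ, hAσ⟩ := hBA.exists_perm (by simp only [Fintype.card_fin]; omega)
  have hCσ := hCB.eq_image_of_eq_image_right (by simpa using han) σ hBσ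
  refine ⟨⟨fun T => .ofAdd (g (B.symm T)), σ⟩, RelIso.ext fun v => ?_⟩
  have hσ {j : ℕ} {E : Layer (Fin n) j ≃ Layer (Fin n) j} (hE : ∀ T, (E T).1 = T.1.image σ)
      (T : Layer (Fin n) j) : permSubsets n j σ T = E T :=
    Subtype.ext (hE T).symm
  rw [wreathHom_apply]
  cases v with
  | top S => simp [permMap, flip, hA, hσ hAσ]
  | mid i T => simp [permMap, flip, hB, hσ hBσ]
  | bot U => simp [permMap, flip, hC, hσ hCσ]

end TriLayer

theorem aut_tokenGraph_K2n_general (n k : ℕ) (hk1 : 2 ≤ k) (hk2 : k ≤ n)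
    (hne : 2 * k ≠ n + 2) :
    Nonempty ((tokenGraph (completeBipartiteGraph (Fin 2) (Fin n)) k ≃g
        tokenGraph (completeBipartiteGraph (Fin 2) (Fin n)) k) ≃*
      ({S : Finset (Fin n) // S.card = k - 1} → Multiplicative (ZMod 2))
        ⋊[wreathAction n (k - 1)] Equiv.Perm (Fin n)) := by
  obtain ⟨a, rfl⟩ : ∃ a, k = a + 2 := ⟨k - 2, by omega⟩
  have hbij : Function.Bijective (TriLayer.wreathHom n a) :=
    ⟨TriLayer.wreathHom_injective hk2, TriLayer.wreathHom_surjective (by omega) hk2 (by omega)⟩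
  exact ⟨(TriLayer.tokenGraphIso (Fin n) a).autCongr.symm.trans
    (MulEquiv.ofBijective _ hbij).symm⟩

/-- For n > 2, 2 ≤ k ≤ n with 2k ≠ n + 2, the automorphism group of
F_k(K_{2,n}) is the wreath product ℤ/2ℤ ≀_Ω S_n, realized as the semidirect
product (Ω → ℤ/2ℤ) ⋊ S_n, where Ω is the set of (k-1)-element subsets of
Fin n. -/
theorem aut_tokenGraph_K2n (n k : ℕ) (hn : 2 < n) (hk1 : 2 ≤ k) (hk2 : k ≤ n)
    (hne : 2 * k ≠ n + 2) :
    Nonempty ((tokenGraph (completeBipartiteGraph (Fin 2) (Fin n)) k ≃g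
        tokenGraph (completeBipartiteGraph (Fin 2) (Fin n)) k) ≃*
      ({S : Finset (Fin n) // S.card = k - 1} → Multiplicative (ZMod 2))
        ⋊[wreathAction n (k - 1)] Equiv.Perm (Fin n)) :=
  aut_tokenGraph_K2n_general n k hk1 hk2 hne
end

section
/- Let r ≥ 2 and let G₁, …, G_r be finite simple graphs, and let G = G₁ □ ⋯ □ G_r be their Cartesian (box) product, with vertices the tuples (x₁,…,x_r). For any subset α ⊆ {1,…,r}, define φ_α on vertices of F_2(G) by φ_α({x, y}) = {x', y'}, where x'_i = y_i and y'_i = x_i for every i ∈ α, and x'_i = x_i and y'_i = y_i for every i ∉ α. Then φ_α is well defined (x' ≠ y' whenever x ≠ y) and is an automorphism of F_2(G). -/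
/-- The Cartesian (box) product of a family of simple graphs: two tuples are
adjacent iff they are adjacent in exactly one coordinate and equal in all the
other coordinates. -/
def piBoxProd {ι : Type*} {V : ι → Type*} (G : ∀ i, SimpleGraph (V i)) :
    SimpleGraph (∀ i, V i) where
  Adj x y := ∃ i, (G i).Adj (x i) (y i) ∧ ∀ j, j ≠ i → x j = y j
  symm := by
    constructor
    rintro x y ⟨i, h, hj⟩
    exact ⟨i, h.symm, fun j hji => (hj j hji).symm⟩
  loopless := by
    constructor
    rintro x ⟨i, h, _⟩
    exact h.ne rfl

/-- Given a pair of tuples `x, y` and a set `α` of coordinates, the tuple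
that agrees with `y` on `α` and with `x` elsewhere. -/
def swapCoords {ι : Type*} {V : ι → Type*} [DecidableEq ι] (α : Finset ι)
    (x y : ∀ i, V i) : ∀ i, V i :=
  fun i => if i ∈ α then y i else x i

/-!
Write `x ⊕ y` for `swapCoords α x y`, so that `φ_α {x, y} = {x ⊕ y, y ⊕ x}`. Since
`(x ⊕ y) ⊕ (y ⊕ x) = x`, `φ_α` is an involution, and `x ⊕ y ≠ y ⊕ x` for `x ≠ y`.
Two vertices of `F₂(G)` are adjacent iff they are `{x, y}` and `{x, z}` with `yz` an edge of
`G`, i.e. `y` and `z` differ in exactly one coordinate `i`, along an edge of `Gᵢ`. If `i ∈ α`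
then `y ⊕ x = z ⊕ x` while `x ⊕ y` and `x ⊕ z` differ along the same edge; if `i ∉ α` the
roles are exchanged. Either way `φ_α` maps edges to edges, and being an involution it is an
automorphism.
-/

open Finset

section TokenGraphTwo

variable {W : Type*} [DecidableEq W]

lemma symmDiff_pair_pair {x y z : W} (hxy : x ≠ y) (hxz : x ≠ z) (hyz : y ≠ z) :
    symmDiff ({x, y} : Finset W) {x, z} = {y, z} := by
  ext w
  simp only [mem_symmDiff, mem_insert, mem_singleton]
  grind

lemma exists_pair_pair_of_symmDiff_eq_pair {A B : Finset W} (hA : #A = 2) (hB : #B = 2)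
    {a b : W} (hab : a ≠ b) (h : symmDiff A B = {a, b}) :
    ∃ x y z, x ≠ y ∧ x ≠ z ∧ A = {x, y} ∧ B = {x, z} ∧
      ({y, z} : Finset W) = {a, b} := by
  have hsd : #(A \ B) + #(B \ A) = 2 := by
    rw [← card_union_of_disjoint disjoint_sdiff_sdiff, ← Finset.symmDiff_def, h, card_pair hab]
  have hAB : #(A \ B) = #(B \ A) := card_sdiff_comm (hA.trans hB.symm)
  obtain ⟨y, hy⟩ := card_eq_one.1 (show #(A \ B) = 1 by omega)
  obtain ⟨z, hz⟩ := card_eq_one.1 (show #(B \ A) = 1 by omega)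
  obtain ⟨x, hx⟩ := card_eq_one.1 (show #(A ∩ B) = 1 by
    have := card_sdiff_add_card_inter A B; omega)
  have hxB : x ∈ A ∩ B := hx ▸ mem_singleton_self x
  have hyA : y ∈ A \ B := hy ▸ mem_singleton_self y
  have hzB : z ∈ B \ A := hz ▸ mem_singleton_self z
  refine ⟨x, y, z, ?_, ?_, ?_, ?_, ?_⟩
  · exact fun hxy => (mem_sdiff.1 hyA).2 (hxy ▸ (mem_inter.1 hxB).2)
  · exact fun hxz => (mem_sdiff.1 hzB).2 (hxz ▸ (mem_inter.1 hxB).1)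
  · rw [← sdiff_union_inter A B, hy, hx, union_comm]; rfl
  · rw [← sdiff_union_inter B A, hz, inter_comm, hx, union_comm]; rfl
  · rw [← h, Finset.symmDiff_def, hy, hz]; rfl

lemma tokenGraph_two_adj_iff (H : SimpleGraph W) {A B : {A : Finset W // #A = 2}} :
    (tokenGraph H 2).Adj A B ↔
      ∃ x y z, x ≠ y ∧ x ≠ z ∧ H.Adj y z ∧ A.1 = {x, y} ∧ B.1 = {x, z} := by
  constructor
  · rintro ⟨a, b, hab, h⟩
    obtain ⟨x, y, z, hxy, hxz, hA, hB, hyz⟩ :=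
      exists_pair_pair_of_symmDiff_eq_pair A.2 B.2 hab.ne h
    refine ⟨x, y, z, hxy, hxz, ?_, hA, hB⟩
    have hyz' : ({y, z} : Set W) = {a, b} := by rw [← coe_pair, hyz, coe_pair]
    rcases Set.pair_eq_pair_iff.1 hyz' with ⟨rfl, rfl⟩ | ⟨rfl, rfl⟩
    exacts [hab, hab.symm]
  · rintro ⟨x, y, z, hxy, hxz, hyz, hA, hB⟩
    exact ⟨y, z, hyz, by rw [hA, hB, symmDiff_pair_pair hxy hxz hyz.ne]⟩

end TokenGraphTwo

section SwapCoords

variable {ι : Type*} {V : ι → Type*} [DecidableEq ι] (α : Finset ι)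

@[simp]
lemma swapCoords_swapCoords (x y : ∀ i, V i) :
    swapCoords α (swapCoords α x y) (swapCoords α y x) = x := by
  funext i
  by_cases hi : i ∈ α <;> simp [swapCoords, hi]

lemma swapCoords_ne_swapCoords {x y : ∀ i, V i} (hxy : x ≠ y) :
    swapCoords α x y ≠ swapCoords α y x := fun h => hxy <|
  calc x = swapCoords α (swapCoords α x y) (swapCoords α y x) :=
        (swapCoords_swapCoords α x y).symm
    _ = swapCoords α (swapCoords α y x) (swapCoords α x y) := by rw [h]
    _ = y := swapCoords_swapCoords α y x

lemma piBoxProd_adj_swapCoords {G : ∀ i, SimpleGraph (V i)} {y z : ∀ i, V i}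
    (h : (piBoxProd G).Adj y z) (x : ∀ i, V i) :
    (swapCoords α y x = swapCoords α z x ∧
        (piBoxProd G).Adj (swapCoords α x y) (swapCoords α x z)) ∨
      (swapCoords α x y = swapCoords α x z ∧
        (piBoxProd G).Adj (swapCoords α y x) (swapCoords α z x)) := by
  obtain ⟨i, hi, hyz⟩ := h
  by_cases hiα : i ∈ α
  · refine Or.inl ⟨funext fun j => ?_, i, by simpa [swapCoords, hiα] using hi, fun j hj => ?_⟩
    · by_cases hjα : j ∈ α
      · simp [swapCoords, hjα]
      · simp [swapCoords, hjα, hyz j fun e => hjα (e ▸ hiα)]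
    · by_cases hjα : j ∈ α <;> simp [swapCoords, hjα, hyz j hj]
  · refine Or.inr ⟨funext fun j => ?_, i, by simpa [swapCoords, hiα] using hi, fun j hj => ?_⟩
    · by_cases hjα : j ∈ α
      · simp [swapCoords, hjα, hyz j fun e => hiα (e ▸ hjα)]
      · simp [swapCoords, hjα]
    · by_cases hjα : j ∈ α <;> simp [swapCoords, hjα, hyz j hj]

variable [DecidableEq (∀ i, V i)]

/-- `φ_α`, read off the ordered pairs of distinct elements so that no order of the two
tokens has to be chosen. -/
def swapPair (A : Finset (∀ i, V i)) : Finset (∀ i, V i) :=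
  A.offDiag.image fun p => swapCoords α p.1 p.2

lemma swapPair_pair {x y : ∀ i, V i} (hxy : x ≠ y) :
    swapPair α {x, y} = {swapCoords α x y, swapCoords α y x} := by
  ext w
  simp only [swapPair, mem_image, mem_offDiag, mem_insert, mem_singleton, Prod.exists]
  grind

lemma card_swapPair {A : Finset (∀ i, V i)} (hA : #A = 2) : #(swapPair α A) = 2 := by
  obtain ⟨x, y, hxy, rfl⟩ := card_eq_two.1 hA
  rw [swapPair_pair α hxy, card_pair (swapCoords_ne_swapCoords α hxy)]

lemma swapPair_swapPair {A : Finset (∀ i, V i)} (hA : #A = 2) :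
    swapPair α (swapPair α A) = A := by
  obtain ⟨x, y, hxy, rfl⟩ := card_eq_two.1 hA
  rw [swapPair_pair α hxy, swapPair_pair α (swapCoords_ne_swapCoords α hxy),
    swapCoords_swapCoords, swapCoords_swapCoords]

def tokenSwap (A : {A : Finset (∀ i, V i) // #A = 2}) : {A : Finset (∀ i, V i) // #A = 2} :=
  ⟨swapPair α A, card_swapPair α A.2⟩

lemma tokenSwap_involutive : Function.Involutive (tokenSwap α (V := V)) :=
  fun A => Subtype.ext (swapPair_swapPair α A.2)

lemma tokenGraph_adj_tokenSwap (G : ∀ i, SimpleGraph (V i))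
    {A B : {A : Finset (∀ i, V i) // #A = 2}} (h : (tokenGraph (piBoxProd G) 2).Adj A B) :
    (tokenGraph (piBoxProd G) 2).Adj (tokenSwap α A) (tokenSwap α B) := by
  obtain ⟨x, y, z, hxy, hxz, hyz, hA, hB⟩ := (tokenGraph_two_adj_iff _).1 h
  have hA' : (tokenSwap α A).1 = {swapCoords α x y, swapCoords α y x} := by
    show swapPair α A.1 = _
    rw [hA, swapPair_pair α hxy]
  have hB' : (tokenSwap α B).1 = {swapCoords α x z, swapCoords α z x} := by
    show swapPair α B.1 = _
    rw [hB, swapPair_pair α hxz]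
  rw [tokenGraph_two_adj_iff]
  rcases piBoxProd_adj_swapCoords α hyz x with ⟨hyx, hadj⟩ | ⟨hxy', hadj⟩
  · refine ⟨swapCoords α y x, swapCoords α x y, swapCoords α x z,
      (swapCoords_ne_swapCoords α hxy).symm, hyx ▸ (swapCoords_ne_swapCoords α hxz).symm,
      hadj, by rw [hA', pair_comm], by rw [hB', hyx, pair_comm]⟩
  · exact ⟨swapCoords α x y, swapCoords α y x, swapCoords α z x,
      swapCoords_ne_swapCoords α hxy, hxy' ▸ swapCoords_ne_swapCoords α hxz,
      hadj, hA', by rw [hB', hxy']⟩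

def tokenSwapIso (G : ∀ i, SimpleGraph (V i)) :
    tokenGraph (piBoxProd G) 2 ≃g tokenGraph (piBoxProd G) 2 where
  toEquiv := (tokenSwap_involutive α).toPerm
  map_rel_iff' := ⟨fun h => by
      simpa only [Function.Involutive.coe_toPerm, tokenSwap_involutive α _] using
        tokenGraph_adj_tokenSwap α G h,
    tokenGraph_adj_tokenSwap α G⟩

end SwapCoords

theorem swap_automorphism_tokenGraph_boxProd_general (r : ℕ)
    (V : Fin r → Type*) [∀ i, DecidableEq (V i)]
    (G : ∀ i, SimpleGraph (V i)) (α : Finset (Fin r)) :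
    (∀ x y : ∀ i, V i, x ≠ y → swapCoords α x y ≠ swapCoords α y x) ∧
    ∃ φ : tokenGraph (piBoxProd G) 2 ≃g tokenGraph (piBoxProd G) 2,
      ∀ (x y : ∀ i, V i) (h : ({x, y} : Finset (∀ i, V i)).card = 2),
        ((φ ⟨{x, y}, h⟩ : Finset (∀ i, V i))) =
          {swapCoords α x y, swapCoords α y x} :=
  ⟨fun _ _ => swapCoords_ne_swapCoords α, tokenSwapIso α G,
    fun _ _ h => swapPair_pair α (card_pair_eq_two_iff.1 h)⟩

/-- For a box product G = G₁ □ ⋯ □ G_r (r ≥ 2) and a set α of coordinates,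
the map φ_α swapping the two tokens in the coordinates of α is well defined
(x'\'' ≠ y'\'' whenever x ≠ y) and is an automorphism of F₂(G). -/
theorem swap_automorphism_tokenGraph_boxProd (r : ℕ) (hr : 2 ≤ r)
    (V : Fin r → Type*) [∀ i, Fintype (V i)] [∀ i, DecidableEq (V i)]
    (G : ∀ i, SimpleGraph (V i)) (α : Finset (Fin r)) :
    (∀ x y : ∀ i, V i, x ≠ y → swapCoords α x y ≠ swapCoords α y x) ∧
    ∃ φ : tokenGraph (piBoxProd G) 2 ≃g tokenGraph (piBoxProd G) 2,
      ∀ (x y : ∀ i, V i) (h : ({x, y} : Finset (∀ i, V i)).card = 2),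
        ((φ ⟨{x, y}, h⟩ : Finset (∀ i, V i))) =
          {swapCoords α x y, swapCoords α y x} :=
  swap_automorphism_tokenGraph_boxProd_general r V G α
end

section
/- Let m ≤ n be positive integers, 1 ≤ k ≤ n, r := min(m,k), and 2 ≤ i ≤ r. Let H_i and H_{i−1} be the sets of vertices A of F_k(K_{m,n}) with |A ∩ X| = i and |A ∩ X| = i − 1, respectively. Then any two distinct vertices A, B ∈ H_i have distinct neighborhoods in H_{i−1}: N(A) ∩ H_{i−1} ≠ N(B) ∩ H_{i−1}, where N denotes the neighborhood in F_k(K_{m,n}). -/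
/-- The number of elements of a finite set of vertices of `K_{m,n}`
(on `Fin m ⊕ Fin n`) lying in the left part `X`. -/
def leftCard {m n : ℕ} (A : Finset (Fin m ⊕ Fin n)) : ℕ :=
  (A.filter (fun v => v.isLeft = true)).card

/-- `H_i`: the set of vertices `A` of `F_k(K_{m,n})` with `|A ∩ X| = i`. -/
def levelSet (m n k i : ℕ) :
    Set {A : Finset (Fin m ⊕ Fin n) // A.card = k} :=
  {A | leftCard A.1 = i}

/-
A vertex `A ∈ H_i` can be read off from its neighbourhood in `H_{i-1}`. Every such neighbour
arises by moving one token of `A` from `X` to `Y`, so it keeps `A ∩ Y` and adds nothing to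
`A ∩ X`. Conversely, since `i ≥ 2` and `|Y \ A| ≥ 2`, every token of `A ∩ X` survives in
some neighbour and every vertex of `Y \ A` is avoided by some neighbour. Hence `A ∩ X` is the
union of the `X`-parts of the neighbours and `A ∩ Y` the intersection of their `Y`-parts.
-/

open Finset
open scoped symmDiff

lemma Finset.subset_of_card_symmDiff_le_two {α : Type*} [DecidableEq α] {s t : Finset α}
    (h : #(s ∆ t) ≤ 2) (hlt : #t < #s) : t ⊆ s := by
  have hsymm : #(s ∆ t) = #(s \ t) + #(t \ s) := card_union_of_disjoint disjoint_sdiff_sdiff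
  have hs := card_sdiff_add_card_inter s t
  have ht := card_sdiff_add_card_inter t s
  rw [inter_comm] at ht
  rw [← sdiff_eq_empty_iff_subset, ← card_eq_zero]
  omega

section TokenGraph

variable {V : Type*} [DecidableEq V] {G : SimpleGraph V} {k : ℕ}

def moveToken (A : {A : Finset V // A.card = k}) {x y : V} (hx : x ∈ A.1) (hy : y ∉ A.1) :
    {A : Finset V // A.card = k} :=
  ⟨insert y (A.1.erase x), by
    rw [card_insert_of_notMem (mt mem_of_mem_erase hy), card_erase_add_one hx, A.2]⟩

lemma tokenGraph_adj_moveToken (A : {A : Finset V // A.card = k}) {x y : V} (hxy : G.Adj x y)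
    (hx : x ∈ A.1) (hy : y ∉ A.1) : (tokenGraph G k).Adj A (moveToken A hx hy) := by
  refine ⟨x, y, hxy, ?_⟩
  have hne := hxy.ne
  ext v
  simp only [moveToken, mem_symmDiff, mem_insert, mem_erase, mem_singleton]
  grind

lemma tokenGraph_card_symmDiff_le_two {A C : {A : Finset V // A.card = k}}
    (h : (tokenGraph G k).Adj A C) : #(A.1 ∆ C.1) ≤ 2 := by
  obtain ⟨a, b, -, hab⟩ := h
  rw [hab]
  exact card_le_two

lemma tokenGraph_filter_subset_of_adj {A C : {A : Finset V // A.card = k}}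
    (h : (tokenGraph G k).Adj A C) (p : V → Prop) [DecidablePred p]
    (hlt : #(C.1.filter p) < #(A.1.filter p)) : C.1.filter p ⊆ A.1 := by
  refine (subset_of_card_symmDiff_le_two (le_trans (card_le_card ?_)
    (tokenGraph_card_symmDiff_le_two h)) hlt).trans (filter_subset _ _)
  intro v
  simp only [mem_symmDiff, mem_filter]
  tauto

lemma tokenGraph_filter_subset_and_filter_not_subset_of_adj {A C : {A : Finset V // A.card = k}}
    (h : (tokenGraph G k).Adj A C) (p : V → Prop) [DecidablePred p]
    (hlt : #(C.1.filter p) < #(A.1.filter p)) :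
    C.1.filter p ⊆ A.1 ∧ A.1.filter (fun v => ¬p v) ⊆ C.1 := by
  refine ⟨tokenGraph_filter_subset_of_adj h p hlt, tokenGraph_filter_subset_of_adj h.symm _ ?_⟩
  have hA := card_filter_add_card_filter_not (s := A.1) p
  have hC := card_filter_add_card_filter_not (s := C.1) p
  rw [A.2] at hA
  rw [C.2] at hC
  omega

end TokenGraph

section CompleteBipartite

variable {m n k i : ℕ} {A C : {A : Finset (Fin m ⊕ Fin n) // A.card = k}}

def lowerNeighborSet (m n k i : ℕ) (A : {A : Finset (Fin m ⊕ Fin n) // A.card = k}) :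
    Set {A : Finset (Fin m ⊕ Fin n) // A.card = k} :=
  (tokenGraph (completeBipartiteGraph (Fin m) (Fin n)) k).neighborSet A ∩ levelSet m n k (i - 1)

lemma leftCard_eq_card_toLeft (s : Finset (Fin m ⊕ Fin n)) : leftCard s = #s.toLeft := by
  rw [leftCard, ← card_map (Function.Embedding.inl : Fin m ↪ Fin m ⊕ Fin n)]
  congr 1
  ext v
  cases v <;> simp

lemma Finset.toLeft_erase_inl {α β : Type*} [DecidableEq α] [DecidableEq β]
    (s : Finset (α ⊕ β)) (a : α) : (s.erase (Sum.inl a)).toLeft = s.toLeft.erase a := by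
  ext
  simp

lemma moveToken_mem_lowerNeighborSet (hA : A ∈ levelSet m n k i) {a : Fin m} {b : Fin n}
    (ha : .inl a ∈ A.1) (hb : .inr b ∉ A.1) :
    moveToken A ha hb ∈ lowerNeighborSet m n k i A := by
  refine ⟨tokenGraph_adj_moveToken A (by simp) ha hb, ?_⟩
  change leftCard (insert _ _) = i - 1
  rw [leftCard_eq_card_toLeft, toLeft_insert_inr, toLeft_erase_inl,
    card_erase_of_mem (mem_toLeft.2 ha), ← leftCard_eq_card_toLeft, hA]

lemma filter_isLeft_subset_and_filter_not_isLeft_subset (hi : 0 < i) (hA : A ∈ levelSet m n k i)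
    (hC : C ∈ lowerNeighborSet m n k i A) :
    C.1.filter (fun v => v.isLeft) ⊆ A.1 ∧ A.1.filter (fun v => ¬v.isLeft) ⊆ C.1 := by
  refine tokenGraph_filter_subset_and_filter_not_subset_of_adj hC.1 _ ?_
  show leftCard C.1 < leftCard A.1
  rw [hC.2, hA]
  omega

lemma one_lt_card_compl_toRight (hkn : k ≤ n) (hi : 2 ≤ i) (hA : A ∈ levelSet m n k i) :
    1 < #A.1.toRightᶜ := by
  have hsplit := card_toLeft_add_card_toRight (u := A.1)
  rw [← leftCard_eq_card_toLeft, hA, A.2] at hsplit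
  rw [card_compl, Fintype.card_fin]
  omega

lemma exists_lowerNeighbor_inl_mem (hkn : k ≤ n) (hi : 2 ≤ i) (hA : A ∈ levelSet m n k i)
    {a : Fin m} (ha : .inl a ∈ A.1) : ∃ C ∈ lowerNeighborSet m n k i A, .inl a ∈ C.1 := by
  have hleft : 1 < #A.1.toLeft := by rwa [← leftCard_eq_card_toLeft, hA]
  obtain ⟨a', ha', hne⟩ := exists_mem_ne hleft a
  obtain ⟨b, hb⟩ := card_pos.1 (one_lt_card_compl_toRight hkn hi hA).le
  rw [mem_toLeft] at ha'
  rw [mem_compl, mem_toRight] at hb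
  exact ⟨_, moveToken_mem_lowerNeighborSet hA ha' hb,
    mem_insert_of_mem (by simp [hne.symm, ha])⟩

lemma exists_lowerNeighbor_inr_notMem (hkn : k ≤ n) (hi : 2 ≤ i) (hA : A ∈ levelSet m n k i)
    {b : Fin n} (hb : .inr b ∉ A.1) : ∃ C ∈ lowerNeighborSet m n k i A, .inr b ∉ C.1 := by
  have hleft : 0 < #A.1.toLeft := by rw [← leftCard_eq_card_toLeft, hA]; omega
  obtain ⟨a, ha⟩ := card_pos.1 hleft
  obtain ⟨b', hb', hne⟩ := exists_mem_ne (one_lt_card_compl_toRight hkn hi hA) b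
  rw [mem_toLeft] at ha
  rw [mem_compl, mem_toRight] at hb'
  exact ⟨_, moveToken_mem_lowerNeighborSet hA ha hb', by simp [moveToken, hne.symm, hb]⟩

lemma subset_of_lowerNeighborSet_eq (hkn : k ≤ n) (hi : 2 ≤ i) (hA : A ∈ levelSet m n k i)
    (hC : C ∈ levelSet m n k i) (h : lowerNeighborSet m n k i A = lowerNeighborSet m n k i C) :
    A.1 ⊆ C.1 := by
  intro v hv
  cases v with
  | inl a =>
    obtain ⟨D, hD, haD⟩ := exists_lowerNeighbor_inl_mem hkn hi hA hv
    rw [h] at hD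
    exact (filter_isLeft_subset_and_filter_not_isLeft_subset (by omega) hC hD).1
      (mem_filter.2 ⟨haD, rfl⟩)
  | inr b =>
    by_contra hbC
    obtain ⟨D, hD, hbD⟩ := exists_lowerNeighbor_inr_notMem hkn hi hC hbC
    rw [← h] at hD
    exact hbD ((filter_isLeft_subset_and_filter_not_isLeft_subset (by omega) hA hD).2
      (mem_filter.2 ⟨hv, by simp⟩))

end CompleteBipartite

theorem tokenGraph_Kmn_distinct_neighborhoods_general (m n k i : ℕ)
    (hk2 : k ≤ n) (hi1 : 2 ≤ i)
    (A B : {A : Finset (Fin m ⊕ Fin n) // A.card = k})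
    (hA : A ∈ levelSet m n k i) (hB : B ∈ levelSet m n k i) (hAB : A ≠ B) :
    (tokenGraph (completeBipartiteGraph (Fin m) (Fin n)) k).neighborSet A ∩
        levelSet m n k (i - 1) ≠
      (tokenGraph (completeBipartiteGraph (Fin m) (Fin n)) k).neighborSet B ∩
        levelSet m n k (i - 1) := by
  intro h
  exact hAB (Subtype.ext (eq_of_subset_of_card_le (subset_of_lowerNeighborSet_eq hk2 hi1 hA hB h)
    (by rw [A.2, B.2])))

/-- For 2 ≤ i ≤ r := min m k, any two distinct vertices A, B ∈ H_i of
F_k(K_{m,n}) have distinct neighborhoods in H_{i−1}. -/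
theorem tokenGraph_Kmn_distinct_neighborhoods (m n k i : ℕ) (hm : 1 ≤ m)
    (hmn : m ≤ n) (hk1 : 1 ≤ k) (hk2 : k ≤ n) (hi1 : 2 ≤ i)
    (hi2 : i ≤ min m k)
    (A B : {A : Finset (Fin m ⊕ Fin n) // A.card = k})
    (hA : A ∈ levelSet m n k i) (hB : B ∈ levelSet m n k i) (hAB : A ≠ B) :
    (tokenGraph (completeBipartiteGraph (Fin m) (Fin n)) k).neighborSet A ∩
        levelSet m n k (i - 1) ≠
      (tokenGraph (completeBipartiteGraph (Fin m) (Fin n)) k).neighborSet B ∩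
        levelSet m n k (i - 1) :=
  tokenGraph_Kmn_distinct_neighborhoods_general m n k i hk2 hi1 A B hA hB hAB
end
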